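/- The angular spectrum representation solves the Helmholtz equation: the function u is twice continuously differentiable on the open half-plane {(x₁,x₂) ∈ ℝ² : x₂ > h} and satisfies ∂²u/∂x₁² + ∂²u/∂x₂² + k² u = 0 there. -/

import Mathlib

open MeasureTheory

noncomputable def rho (w : ℂ) : ℂ :=
  (Real.sqrt ((‖w‖ + w.re) / 2) : ℝ) +
    Complex.I * (Real.sqrt ((‖w‖ - w.re) / 2) : ℝ)

noncomputable def asr (k : ℂ) (h : ℝ) (F : SchwartzMap ℝ ℂ) (p : ℝ × ℝ) : ℂ :=
  ∫ ξ : ℝ, Complex.exp (Complex.I *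
    (((p.2 - h : ℝ) : ℂ) * rho (k ^ 2 - (ξ : ℂ) ^ 2) + (p.1 : ℂ) * (ξ : ℂ))) * F ξ

/-!
Each mode `exp (i ((x₂ - h) κ + x₁ ξ))` with `κ = ρ(k² - ξ²)` solves the Helmholtz equation because
`κ² + ξ² = k²`, and `Im κ ≥ 0` bounds it by `1` on `x₂ ≥ h`. Differentiating a mode in `x₁` or `x₂`
multiplies it by `iξ` or `iκ`, both of at most linear growth in `ξ`, which the rapid decay of `F`
absorbs. So dominated differentiation under the integral applies to every
`∫ (iξ)ᵃ (iκ)ᵇ · mode · F`, its partial derivatives raise `a` or `b` by one, and `u` is smooth with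
`∂₁²u + ∂₂²u + k²u = ∫ ((iξ)² + (iκ)² + k²) · mode · F = 0`.
-/

open Filter Topology

@[simp] lemma rho_re (w : ℂ) : (rho w).re = √((‖w‖ + w.re) / 2) := by simp [rho]
@[simp] lemma rho_im (w : ℂ) : (rho w).im = √((‖w‖ - w.re) / 2) := by simp [rho]

lemma im_rho_nonneg (w : ℂ) : 0 ≤ (rho w).im := by
  rw [rho_im]
  positivity

lemma continuous_rho : Continuous rho := by
  unfold rho
  fun_prop

lemma norm_rho_sq (w : ℂ) : ‖rho w‖ ^ 2 = ‖w‖ := by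
  have hre := Complex.abs_re_le_norm w
  rw [Complex.sq_norm, Complex.normSq_apply, rho_re, rho_im, Real.mul_self_sqrt,
    Real.mul_self_sqrt] <;> linarith [abs_le.mp hre]

lemma rho_sq {w : ℂ} (hw : 0 ≤ w.im) : rho w ^ 2 = w := by
  have hre := abs_le.mp (Complex.abs_re_le_norm w)
  have hplus : 0 ≤ (‖w‖ + w.re) / 2 := by linarith
  have hminus : 0 ≤ (‖w‖ - w.re) / 2 := by linarith
  have hprod : (‖w‖ + w.re) / 2 * ((‖w‖ - w.re) / 2) = (w.im / 2) ^ 2 := by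
    have := Complex.sq_norm w
    rw [Complex.normSq_apply] at this
    linear_combination this / 4
  apply Complex.ext
  · simp only [sq, Complex.mul_re, rho_re, rho_im, Real.mul_self_sqrt hplus,
      Real.mul_self_sqrt hminus]
    ring
  · simp only [sq, Complex.mul_im, rho_re, rho_im]
    rw [mul_comm √((‖w‖ - w.re) / 2), ← Real.sqrt_mul hplus, hprod,
      Real.sqrt_sq (by linarith)]
    ring

namespace SchwartzMap

variable {D V : Type*} [NormedAddCommGroup D] [NormedSpace ℝ D] [MeasurableSpace D] [BorelSpace D]
  [SecondCountableTopology D] [NormedAddCommGroup V] [NormedSpace ℝ V]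
  {μ : Measure D} [μ.HasTemperateGrowth]

lemma integrable_one_add_norm_pow_mul (f : 𝓢(D, V)) (n : ℕ) :
    Integrable (fun x ↦ (1 + ‖x‖) ^ n * ‖f x‖) μ := by
  have hbinom : (fun x ↦ (1 + ‖x‖) ^ n * ‖f x‖) =
      fun x ↦ ∑ m ∈ Finset.range (n + 1), (n.choose m : ℝ) * (‖x‖ ^ m * ‖f x‖) := by
    funext x
    rw [add_comm, add_pow, Finset.sum_mul]
    refine Finset.sum_congr rfl fun m _ ↦ ?_
    ring
  rw [hbinom]
  exact integrable_finsetSum _ fun m _ ↦ (f.integrable_pow_mul μ m).const_mul _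

end SchwartzMap

section Partials

variable {E : Type*} [NormedAddCommGroup E] [NormedSpace ℝ E]

noncomputable def ofPartials : E × E →L[ℝ] (ℝ × ℝ →L[ℝ] E) :=
  (ContinuousLinearMap.smulRightL ℝ (ℝ × ℝ) E (ContinuousLinearMap.fst ℝ ℝ ℝ)).coprod
    (ContinuousLinearMap.smulRightL ℝ (ℝ × ℝ) E (ContinuousLinearMap.snd ℝ ℝ ℝ))

@[simp] lemma ofPartials_apply (x y : E) (v : ℝ × ℝ) :
    ofPartials (x, y) v = v.1 • x + v.2 • y := by
  simp [ofPartials]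

lemma HasFDerivAt.hasDerivAt_fst_of_ofPartials {f : ℝ × ℝ → E} {x y : E} {p : ℝ × ℝ}
    (hf : HasFDerivAt f (ofPartials (x, y)) p) : HasDerivAt (fun s ↦ f (s, p.2)) x p.1 := by
  simpa [Function.comp_def] using
    hf.comp_hasDerivAt p.1 ((hasDerivAt_id p.1).prodMk (hasDerivAt_const p.1 p.2))

lemma HasFDerivAt.hasDerivAt_snd_of_ofPartials {f : ℝ × ℝ → E} {x y : E} {p : ℝ × ℝ}
    (hf : HasFDerivAt f (ofPartials (x, y)) p) : HasDerivAt (fun t ↦ f (p.1, t)) y p.2 := by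
  simpa [Function.comp_def] using
    hf.comp_hasDerivAt p.2 ((hasDerivAt_const p.2 p.1).prodMk (hasDerivAt_id p.2))

end Partials

namespace AngularSpectrum

open Complex

variable (k : ℂ) (h : ℝ) (F : SchwartzMap ℝ ℂ)

noncomputable def verticalWavenumber (ξ : ℝ) : ℂ := rho (k ^ 2 - (ξ : ℂ) ^ 2)

lemma verticalWavenumber_sq (hk : 0 ≤ (k ^ 2).im) (ξ : ℝ) :
    verticalWavenumber k ξ ^ 2 = k ^ 2 - (ξ : ℂ) ^ 2 :=
  rho_sq (by simpa [sq] using hk)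

lemma norm_verticalWavenumber_le (ξ : ℝ) : ‖verticalWavenumber k ξ‖ ≤ ‖k‖ + ‖ξ‖ := by
  refine (pow_le_pow_iff_left₀ (norm_nonneg _) (by positivity) two_ne_zero).mp ?_
  calc ‖verticalWavenumber k ξ‖ ^ 2 = ‖k ^ 2 - (ξ : ℂ) ^ 2‖ := norm_rho_sq _
    _ ≤ ‖k‖ ^ 2 + ‖ξ‖ ^ 2 := (norm_sub_le _ _).trans_eq (by rw [norm_pow, norm_pow, norm_real])
    _ ≤ (‖k‖ + ‖ξ‖) ^ 2 := by nlinarith [norm_nonneg k, norm_nonneg ξ]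

lemma continuous_verticalWavenumber : Continuous (verticalWavenumber k) :=
  continuous_rho.comp (by fun_prop)

noncomputable def planeWave (q : ℝ × ℝ) (ξ : ℝ) : ℂ :=
  exp (I * (((q.2 - h : ℝ) : ℂ) * verticalWavenumber k ξ + (q.1 : ℂ) * ξ))

lemma norm_planeWave_le_one {q : ℝ × ℝ} (hq : h ≤ q.2) (ξ : ℝ) : ‖planeWave k h q ξ‖ ≤ 1 := by
  have hre : (I * (((q.2 - h : ℝ) : ℂ) * verticalWavenumber k ξ + (q.1 : ℂ) * ξ)).re =
      -((q.2 - h) * (verticalWavenumber k ξ).im) := by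
    simp
  rw [planeWave, norm_exp, hre, Real.exp_le_one_iff, neg_nonpos]
  exact mul_nonneg (sub_nonneg.mpr hq) (im_rho_nonneg _)

lemma continuous_planeWave (q : ℝ × ℝ) : Continuous (planeWave k h q) := by
  have := continuous_verticalWavenumber k
  unfold planeWave
  fun_prop

lemma hasFDerivAt_planeWave (q : ℝ × ℝ) (ξ : ℝ) :
    HasFDerivAt (fun q ↦ planeWave k h q ξ)
      (planeWave k h q ξ • ofPartials (I * ξ, I * verticalWavenumber k ξ)) q := by
  have hphase :
      (fun q : ℝ × ℝ ↦ I * (((q.2 - h : ℝ) : ℂ) * verticalWavenumber k ξ + (q.1 : ℂ) * ξ)) =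
        fun q ↦ ofPartials (I * ξ, I * verticalWavenumber k ξ) q
          - h • (I * verticalWavenumber k ξ) := by
    funext q
    simp only [ofPartials_apply, real_smul]
    push_cast
    ring
  have := (ofPartials (I * ξ, I * verticalWavenumber k ξ)).hasFDerivAt.sub_const
    (h • (I * verticalWavenumber k ξ)) (x := q)
  rw [← hphase] at this
  exact this.cexp

/-- The Fourier symbol of `∂₁ᵃ ∂₂ᵇ` on plane waves. -/
noncomputable def symbol (a b : ℕ) (ξ : ℝ) : ℂ := (I * ξ) ^ a * (I * verticalWavenumber k ξ) ^ b

lemma continuous_symbol (a b : ℕ) : Continuous (symbol k a b) := by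
  have := continuous_verticalWavenumber k
  unfold symbol
  fun_prop

lemma norm_symbol_le (a b : ℕ) (ξ : ℝ) :
    ‖symbol k a b ξ‖ ≤ ((1 + ‖k‖) * (1 + ‖ξ‖)) ^ (a + b) := by
  have hξ : ‖I * ξ‖ ≤ (1 + ‖k‖) * (1 + ‖ξ‖) := by
    rw [norm_mul, norm_I, one_mul, norm_real]
    nlinarith [norm_nonneg k, norm_nonneg ξ]
  have hκ : ‖I * verticalWavenumber k ξ‖ ≤ (1 + ‖k‖) * (1 + ‖ξ‖) := by
    rw [norm_mul, norm_I, one_mul]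
    nlinarith [norm_verticalWavenumber_le k ξ, norm_nonneg k, norm_nonneg ξ]
  rw [symbol, norm_mul, norm_pow, norm_pow, pow_add]
  gcongr

lemma symbol_helmholtz (hk : 0 ≤ (k ^ 2).im) (ξ : ℝ) :
    symbol k 2 0 ξ + symbol k 0 2 ξ + k ^ 2 * symbol k 0 0 ξ = 0 := by
  simp only [symbol, mul_pow, I_sq, verticalWavenumber_sq k hk]
  ring

noncomputable def asrIntegrand (a b : ℕ) (q : ℝ × ℝ) (ξ : ℝ) : ℂ :=
  symbol k a b ξ * planeWave k h q ξ * F ξ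

noncomputable def asrDeriv (a b : ℕ) (q : ℝ × ℝ) : ℂ :=
  ∫ ξ, asrIntegrand k h F a b q ξ

lemma continuous_asrIntegrand (a b : ℕ) (q : ℝ × ℝ) : Continuous (asrIntegrand k h F a b q) :=
  ((continuous_symbol k a b).mul (continuous_planeWave k h q)).mul F.continuous

lemma norm_asrIntegrand_le (a b : ℕ) {q : ℝ × ℝ} (hq : h ≤ q.2) (ξ : ℝ) :
    ‖asrIntegrand k h F a b q ξ‖ ≤ ((1 + ‖k‖) * (1 + ‖ξ‖)) ^ (a + b) * ‖F ξ‖ := by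
  rw [asrIntegrand, norm_mul, norm_mul]
  calc _ ≤ ((1 + ‖k‖) * (1 + ‖ξ‖)) ^ (a + b) * 1 * ‖F ξ‖ := by
        gcongr
        exacts [norm_symbol_le k a b ξ, norm_planeWave_le_one k h hq ξ]
    _ = _ := by ring

lemma integrable_pow_mul_norm (n : ℕ) :
    Integrable (fun ξ : ℝ ↦ ((1 + ‖k‖) * (1 + ‖ξ‖)) ^ n * ‖F ξ‖) := by
  simpa only [mul_pow, mul_assoc] using
    (F.integrable_one_add_norm_pow_mul (μ := volume) n).const_mul ((1 + ‖k‖) ^ n)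

lemma integrable_asrIntegrand (a b : ℕ) {q : ℝ × ℝ} (hq : h ≤ q.2) :
    Integrable (asrIntegrand k h F a b q) :=
  (integrable_pow_mul_norm k F (a + b)).mono'
    (continuous_asrIntegrand k h F a b q).aestronglyMeasurable
    (Eventually.of_forall (norm_asrIntegrand_le k h F a b hq))

lemma hasFDerivAt_asrIntegrand (a b : ℕ) (q : ℝ × ℝ) (ξ : ℝ) :
    HasFDerivAt (asrIntegrand k h F a b · ξ)
      (ofPartials (asrIntegrand k h F (a + 1) b q ξ, asrIntegrand k h F a (b + 1) q ξ)) q := by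
  refine (((hasFDerivAt_planeWave k h q ξ).const_mul (symbol k a b ξ)).mul_const
    (F ξ)).congr_fderiv ?_
  refine ContinuousLinearMap.ext fun v ↦ ?_
  simp [asrIntegrand, symbol, pow_succ]
  ring

theorem hasFDerivAt_asrDeriv (a b : ℕ) {q : ℝ × ℝ} (hq : h < q.2) :
    HasFDerivAt (asrDeriv k h F a b)
      (ofPartials (asrDeriv k h F (a + 1) b q, asrDeriv k h F a (b + 1) q)) q := by
  have hint₁ := integrable_asrIntegrand k h F (a + 1) b hq.le
  have hint₂ := integrable_asrIntegrand k h F a (b + 1) hq.le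
  have hderiv := hasFDerivAt_integral_of_dominated_of_fderiv_le (μ := volume)
    ((isOpen_lt continuous_const continuous_snd).mem_nhds hq)
    (F' := fun q ξ ↦
      ofPartials (asrIntegrand k h F (a + 1) b q ξ, asrIntegrand k h F a (b + 1) q ξ))
    (bound := fun ξ ↦ ‖ofPartials (E := ℂ)‖ *
      (((1 + ‖k‖) * (1 + ‖ξ‖)) ^ (a + b + 1) * ‖F ξ‖))
    (Eventually.of_forall fun q ↦ (continuous_asrIntegrand k h F a b q).aestronglyMeasurable)
    (integrable_asrIntegrand k h F a b hq.le)
    (ofPartials.continuous.comp_aestronglyMeasurable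
      (hint₁.aestronglyMeasurable.prodMk hint₂.aestronglyMeasurable))
    (Eventually.of_forall fun ξ q (hq' : h < q.2) ↦ ?_)
    ((integrable_pow_mul_norm k F _).const_mul _)
    (Eventually.of_forall fun ξ q _ ↦ hasFDerivAt_asrIntegrand k h F a b q ξ)
  · rwa [ofPartials.integral_comp_comm (hint₁.prodMk hint₂), integral_pair hint₁ hint₂] at hderiv
  · refine ((ofPartials (E := ℂ)).le_opNorm _).trans ?_
    gcongr
    refine norm_prod_le_iff.mpr ⟨?_, ?_⟩
    · simpa [add_right_comm] using norm_asrIntegrand_le k h F (a + 1) b hq'.le ξ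
    · simpa [add_assoc] using norm_asrIntegrand_le k h F a (b + 1) hq'.le ξ

lemma differentiableOn_asrDeriv (a b : ℕ) :
    DifferentiableOn ℝ (asrDeriv k h F a b) {q | h < q.2} :=
  fun _ hq ↦ (hasFDerivAt_asrDeriv k h F a b hq).differentiableAt.differentiableWithinAt

theorem contDiffOn_asrDeriv (n a b : ℕ) : ContDiffOn ℝ n (asrDeriv k h F a b) {q | h < q.2} := by
  induction n generalizing a b with
  | zero => exact contDiffOn_zero.mpr (differentiableOn_asrDeriv k h F a b).continuousOn
  | succ n ih =>
    rw [Nat.cast_succ,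
      contDiffOn_succ_iff_fderiv_of_isOpen (isOpen_lt continuous_const continuous_snd)]
    refine ⟨differentiableOn_asrDeriv k h F a b, by simp, ?_⟩
    exact (ofPartials.contDiff.comp_contDiffOn ((ih (a + 1) b).prodMk (ih a (b + 1)))).congr
      fun q hq ↦ (hasFDerivAt_asrDeriv k h F a b hq).fderiv

theorem asrDeriv_helmholtz (hk : 0 ≤ (k ^ 2).im) {q : ℝ × ℝ} (hq : h ≤ q.2) :
    asrDeriv k h F 2 0 q + asrDeriv k h F 0 2 q + k ^ 2 * asrDeriv k h F 0 0 q = 0 := by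
  have hint (a b : ℕ) := integrable_asrIntegrand k h F a b hq
  rw [asrDeriv, asrDeriv, asrDeriv, ← integral_add (hint 2 0) (hint 0 2), ← integral_const_mul,
    ← integral_add]
  rotate_left
  · exact (hint 2 0).add (hint 0 2)
  · exact (hint 0 0).const_mul _
  convert integral_zero ℝ ℂ with ξ
  simp only [asrIntegrand]
  linear_combination (planeWave k h q ξ * F ξ) * symbol_helmholtz k hk ξ

end AngularSpectrum

open AngularSpectrum

/-- The angular spectrum representation solves the Helmholtz equation: `u` is twice
continuously differentiable on the open half-plane `{x₂ > h}` and satisfies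
`∂²u/∂x₁² + ∂²u/∂x₂² + k² u = 0` there. -/
theorem asr_solves_helmholtz (k : ℂ) (hk : 0 ≤ (k ^ 2).im) (h : ℝ) (F : SchwartzMap ℝ ℂ) :
    ContDiffOn ℝ 2 (asr k h F) {p : ℝ × ℝ | h < p.2} ∧
      ∀ p : ℝ × ℝ, h < p.2 →
        deriv (fun x₁ : ℝ => deriv (fun s : ℝ => asr k h F (s, p.2)) x₁) p.1 +
          deriv (fun x₂ : ℝ => deriv (fun t : ℝ => asr k h F (p.1, t)) x₂) p.2 +
          k ^ 2 * asr k h F p = 0 := by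
  have hasr : asr k h F = asrDeriv k h F 0 0 := by
    funext p
    simp [asr, asrDeriv, asrIntegrand, symbol, planeWave, verticalWavenumber]
  rw [hasr]
  refine ⟨contDiffOn_asrDeriv k h F 2 0 0, fun p hp ↦ ?_⟩
  have hfst (a : ℕ) (x₁ : ℝ) :
      deriv (fun s ↦ asrDeriv k h F a 0 (s, p.2)) x₁ = asrDeriv k h F (a + 1) 0 (x₁, p.2) :=
    (hasFDerivAt_asrDeriv k h F a 0 (q := (x₁, p.2)) hp).hasDerivAt_fst_of_ofPartials.deriv
  have hsnd (b : ℕ) : (fun x₂ ↦ deriv (fun t ↦ asrDeriv k h F 0 b (p.1, t)) x₂) =ᶠ[𝓝 p.2]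
      fun x₂ ↦ asrDeriv k h F 0 (b + 1) (p.1, x₂) :=
    (eventually_gt_nhds hp).mono fun x₂ hx₂ ↦
      (hasFDerivAt_asrDeriv k h F 0 b (q := (p.1, x₂)) hx₂).hasDerivAt_snd_of_ofPartials.deriv
  have h₁ : deriv (fun x₁ ↦ deriv (fun s ↦ asrDeriv k h F 0 0 (s, p.2)) x₁) p.1 =
      asrDeriv k h F 2 0 p := by
    simp only [hfst]
  have h₂ : deriv (fun x₂ ↦ deriv (fun t ↦ asrDeriv k h F 0 0 (p.1, t)) x₂) p.2 =
      asrDeriv k h F 0 2 p := by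
    rw [(hsnd 0).deriv_eq]
    exact (hsnd 1).eq_of_nhds
  rw [h₁, h₂]
  exact asrDeriv_helmholtz k h F hk hp.le
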